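/- Fix an integer r ≥ 2. Define f_r(n) = max { q_min(G) : G a K_{r+1}-free graph of order n } and c_r = sup { q_min(G)/v(G) : G a K_{r+1}-free graph }, where v(G) is the order of G. Then the limit lim_{n→∞} f_r(n)/n exists and equals c_r. -/

import Mathlib

open Matrix SimpleGraph Finset

/-- The signless Laplacian matrix `Q(G) = D + A` of a finite simple graph `G`. -/
noncomputable def signlessLaplacian {V : Type} [Fintype V] [DecidableEq V]
    (G : SimpleGraph V) : Matrix V V ℝ :=
  letI := Classical.decRel G.Adj
  Matrix.diagonal (fun v => (G.degree v : ℝ)) + G.adjMatrix ℝ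

theorem signlessLaplacian_isHermitian {V : Type} [Fintype V] [DecidableEq V]
    (G : SimpleGraph V) : (signlessLaplacian G).IsHermitian := by
  letI := Classical.decRel G.Adj
  unfold signlessLaplacian
  refine Matrix.IsHermitian.add (Matrix.isHermitian_diagonal _) ?_
  rw [Matrix.IsHermitian, conjTranspose_eq_transpose_of_trivial]
  exact G.isSymm_adjMatrix

/-- `qmin G` is the smallest eigenvalue of the signless Laplacian of `G`. -/
noncomputable def qmin {V : Type} [Fintype V] [DecidableEq V] (G : SimpleGraph V) : ℝ :=
  ⨅ i, (signlessLaplacian_isHermitian G).eigenvalues i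

/-- `c r` is the supremum of `qmin(G)/v(G)` over all (nonempty) `K_{r+1}`-free graphs `G`. -/
noncomputable def cSup (r : ℕ) : ℝ :=
  sSup {x : ℝ | ∃ (m : ℕ) (G : SimpleGraph (Fin m)),
    0 < m ∧ G.CliqueFree (r + 1) ∧ x = qmin G / m}

/-- `maxQmin r n` is `f_r(n)`, the maximum of `qmin G` over `K_{r+1}`-free graphs of order `n`. -/
noncomputable def maxQmin (r n : ℕ) : ℝ :=
  sSup {x : ℝ | ∃ G : SimpleGraph (Fin n), G.CliqueFree (r + 1) ∧ x = qmin G}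

/-!
The upper bound is immediate: `f_r(n)/n` is itself one of the ratios whose supremum is `c_r`.

For the lower bound, blow a `K_{r+1}`-free graph `G` on `m` vertices up to `n` vertices by
sending vertex `a` to `a mod m`; all fibres are independent sets of size `t = ⌊n/m⌋` or `t + 1`,
and the blow-up is still `K_{r+1}`-free. For a test vector `x` on the blow-up let `s` be its
fibre sums: the adjacency part of the quadratic form of `Q` equals that of `G` at `s`, every degree
is at least `t` times the degree in `G`, and Cauchy–Schwarz gives `s_v² ≤ (t + 1) Σ_{fibre} x²`.
Comparing with the Rayleigh quotient of `G` at `s` yields `q_min(blow-up) ≥ t q_min(G) - m`,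
so `liminf f_r(n)/n ≥ q_min(G)/m`.
-/

open scoped Pointwise in
theorem Matrix.IsHermitian.le_iInf_eigenvalues_iff {n : Type*} [Fintype n] [DecidableEq n]
    [Nonempty n] {A : Matrix n n ℝ} (hA : A.IsHermitian) (c : ℝ) :
    c ≤ ⨅ i, hA.eigenvalues i ↔ ∀ x : n → ℝ, c * (x ⬝ᵥ x) ≤ x ⬝ᵥ A *ᵥ x := by
  -- Both sides say that `A - c • 1` is positive semidefinite.
  have hspec : spectrum ℝ (A - algebraMap ℝ _ c) = Set.range hA.eigenvalues - {c} := by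
    rw [← spectrum.sub_singleton_eq, hA.spectrum_real_eq_range_eigenvalues]
  have hherm : (A - algebraMap ℝ _ c).IsHermitian := by
    rw [Matrix.algebraMap_eq_diagonal]
    exact hA.sub (isHermitian_diagonal _)
  rw [le_ciInf_iff (Finite.bddBelow_range _)]
  trans (A - algebraMap ℝ _ c).PosSemidef
  · rw [posSemidef_iff_isHermitian_and_spectrum_nonneg, and_iff_right hherm, hspec]
    simp [Set.subset_def]
  · rw [posSemidef_iff_dotProduct_mulVec, and_iff_right hherm]
    simp [Algebra.algebraMap_eq_smul_one, sub_mulVec, smul_mulVec, dotProduct_smul]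

section SignlessLaplacian

variable {V : Type} [Fintype V] [DecidableEq V]

lemma signlessLaplacian_eq (G : SimpleGraph V) [DecidableRel G.Adj] :
    signlessLaplacian G = diagonal (fun v => (G.degree v : ℝ)) + G.adjMatrix ℝ := by
  unfold signlessLaplacian
  congr!

lemma signlessLaplacian_eq_incMatrix_mul_transpose (G : SimpleGraph V) [DecidableRel G.Adj] :
    signlessLaplacian G = G.incMatrix ℝ * (G.incMatrix ℝ)ᵀ := by
  ext a b
  rw [incMatrix_mul_transpose, signlessLaplacian_eq]
  by_cases hab : a = b
  · subst hab; simp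
  · simp [hab, adjMatrix_apply]

lemma signlessLaplacian_posSemidef (G : SimpleGraph V) : (signlessLaplacian G).PosSemidef := by
  classical
  rw [signlessLaplacian_eq_incMatrix_mul_transpose, ← conjTranspose_eq_transpose_of_trivial]
  exact posSemidef_self_mul_conjTranspose _

lemma qmin_nonneg (G : SimpleGraph V) : 0 ≤ qmin G := by
  cases isEmpty_or_nonempty V
  · simp [qmin]
  · exact le_ciInf (signlessLaplacian_posSemidef G).eigenvalues_nonneg

lemma le_qmin_iff [Nonempty V] (G : SimpleGraph V) (c : ℝ) :
    c ≤ qmin G ↔ ∀ x : V → ℝ, c * (x ⬝ᵥ x) ≤ x ⬝ᵥ signlessLaplacian G *ᵥ x :=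
  (signlessLaplacian_isHermitian G).le_iInf_eigenvalues_iff c

lemma dotProduct_signlessLaplacian_mulVec (G : SimpleGraph V) [DecidableRel G.Adj]
    (x : V → ℝ) :
    x ⬝ᵥ signlessLaplacian G *ᵥ x = ∑ v, G.degree v * x v ^ 2 + x ⬝ᵥ G.adjMatrix ℝ *ᵥ x := by
  rw [signlessLaplacian_eq, add_mulVec, dotProduct_add]
  congr 1
  simp only [dotProduct, mulVec_diagonal]
  exact Finset.sum_congr rfl fun v _ => by ring

lemma qmin_le_degree (G : SimpleGraph V) [DecidableRel G.Adj] (v : V) : qmin G ≤ G.degree v := by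
  have : Nonempty V := ⟨v⟩
  have h := (le_qmin_iff G (qmin G)).1 le_rfl (Pi.single v 1)
  rw [dotProduct_signlessLaplacian_mulVec, mulVec_single] at h
  simpa [Pi.single_apply] using h

lemma qmin_le_card (G : SimpleGraph V) : qmin G ≤ Fintype.card V := by
  classical
  cases isEmpty_or_nonempty V
  · simp [qmin]
  · obtain ⟨v⟩ := ‹Nonempty V›
    exact (qmin_le_degree G v).trans (mod_cast (G.degree_lt_card_verts v).le)

end SignlessLaplacian

section Fibers

variable {V W : Type} [DecidableEq V] [Fintype W]

def fiberSum {R : Type*} [AddCommMonoid R] (p : W → V) (x : W → R) (v : V) : R :=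
  ∑ a with p a = v, x a

lemma sum_mul_fiberSum [Fintype V] {R : Type*} [CommSemiring R] (p : W → V) (x : W → R)
    (f : V → R) : ∑ v, f v * fiberSum p x v = ∑ a, f (p a) * x a := by
  rw [← Finset.sum_fiberwise univ p (fun a => f (p a) * x a)]
  refine sum_congr rfl fun v _ => ?_
  rw [fiberSum, Finset.mul_sum]
  exact sum_congr rfl fun a ha => by rw [(mem_filter.1 ha).2]

lemma dotProduct_submatrix_mulVec [Fintype V] {R : Type*} [CommSemiring R] (A : Matrix V V R)
    (p : W → V) (x : W → R) :
    x ⬝ᵥ A.submatrix p p *ᵥ x = fiberSum p x ⬝ᵥ A *ᵥ fiberSum p x := by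
  have hrow : ∀ u, ∑ b, A u (p b) * x b = ∑ v, A u v * fiberSum p x v :=
    fun u => (sum_mul_fiberSum p x (A u)).symm
  rw [dotProduct_comm, dotProduct_comm (fiberSum p x), dotProduct, dotProduct,
    sum_mul_fiberSum p x (A *ᵥ fiberSum p x)]
  simp only [mulVec, dotProduct, submatrix_apply, hrow]

lemma sq_fiberSum_le (p : W → V) (x : W → ℝ) (v : V) :
    fiberSum p x v ^ 2 ≤ #{a | p a = v} * fiberSum p (fun a => x a ^ 2) v :=
  sq_sum_le_card_mul_sum_sq

omit [DecidableEq V] [Fintype W] in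
lemma adjMatrix_comap (G : SimpleGraph V) [DecidableRel G.Adj] (p : W → V) :
    (G.comap p).adjMatrix ℝ = (G.adjMatrix ℝ).submatrix p p := by
  ext a b
  simp [adjMatrix_apply]

lemma degree_comap [Fintype V] (G : SimpleGraph V) [DecidableRel G.Adj] (p : W → V) (a : W) :
    (G.comap p).degree a = ∑ v ∈ G.neighborFinset (p a), #{b | p b = v} := by
  rw [← card_neighborFinset_eq_degree,
    card_eq_sum_card_fiberwise (f := p) (t := G.neighborFinset (p a)) (by intro b; simp)]
  refine sum_congr rfl fun v hv => congrArg card ?_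
  rw [mem_neighborFinset] at hv
  ext b
  simp only [mem_filter, mem_neighborFinset, comap_adj, mem_univ, true_and]
  exact ⟨And.right, fun h => ⟨h ▸ hv, h⟩⟩

lemma mul_degree_le_degree_comap [Fintype V] (G : SimpleGraph V) [DecidableRel G.Adj]
    (p : W → V) {t : ℕ} (hfib : ∀ v, t ≤ #{a | p a = v}) (a : W) :
    G.degree (p a) * t ≤ (G.comap p).degree a := by
  rw [degree_comap, ← card_neighborFinset_eq_degree, ← smul_eq_mul, ← sum_const]
  exact sum_le_sum fun v _ => hfib v

end Fibers

theorem le_qmin_comap {V W : Type} [Fintype V] [DecidableEq V] [Fintype W] [DecidableEq W]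
    [Nonempty W] (G : SimpleGraph V) (p : W → V) (t : ℕ)
    (hfib : ∀ v, t ≤ #{a | p a = v} ∧ #{a | p a = v} ≤ t + 1) :
    t * qmin G - Fintype.card V ≤ qmin (G.comap p) := by
  classical
  have : Nonempty V := ⟨p (Classical.arbitrary W)⟩
  rw [le_qmin_iff]
  intro x
  set q := qmin G
  set s := fiberSum p x
  set P := fiberSum p (fun a => x a ^ 2)
  have hxx : x ⬝ᵥ x = ∑ v, P v := by
    simpa [dotProduct, ← sq] using (sum_mul_fiberSum p (fun a => x a ^ 2) 1).symm
  have hG : q * (s ⬝ᵥ s) ≤ ∑ v, G.degree v * s v ^ 2 + s ⬝ᵥ G.adjMatrix ℝ *ᵥ s := by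
    rw [← dotProduct_signlessLaplacian_mulVec]
    exact (le_qmin_iff G q).1 le_rfl s
  have hdeg : ∑ v, t * (G.degree v : ℝ) * P v ≤ ∑ a, (G.comap p).degree a * x a ^ 2 := by
    rw [sum_mul_fiberSum p _ (fun v => t * (G.degree v : ℝ))]
    gcongr with a
    rw [mul_comm]
    exact_mod_cast mul_degree_le_degree_comap G p (fun v => (hfib v).1) a
  have hvertex : ∀ v, (t * q - Fintype.card V) * P v
      ≤ t * G.degree v * P v + (q - G.degree v) * s v ^ 2 := by
    intro v
    have hP : 0 ≤ P v := sum_nonneg fun a _ => sq_nonneg (x a)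
    have hs : s v ^ 2 ≤ (t + 1) * P v :=
      (sq_fiberSum_le p x v).trans (by gcongr; exact_mod_cast (hfib v).2)
    have hqd : q ≤ G.degree v := qmin_le_degree G v
    have hdV : (G.degree v : ℝ) ≤ Fintype.card V := mod_cast (G.degree_lt_card_verts v).le
    nlinarith [qmin_nonneg G, mul_le_mul_of_nonneg_left hs (sub_nonneg.2 hqd)]
  calc (t * q - Fintype.card V) * (x ⬝ᵥ x) = ∑ v, (t * q - Fintype.card V) * P v := by
        rw [hxx, mul_sum]
    _ ≤ ∑ v, (t * G.degree v * P v + (q - G.degree v) * s v ^ 2) :=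
        sum_le_sum fun v _ => hvertex v
    _ = ∑ v, t * G.degree v * P v + q * (s ⬝ᵥ s) - ∑ v, G.degree v * s v ^ 2 := by
        simp only [sub_mul, sum_add_distrib, sum_sub_distrib, dotProduct, mul_sum, sq]
        ring
    _ ≤ x ⬝ᵥ signlessLaplacian (G.comap p) *ᵥ x := by
        rw [dotProduct_signlessLaplacian_mulVec, adjMatrix_comap, dotProduct_submatrix_mulVec]
        linarith

lemma card_filter_val_mod_eq {n m : ℕ} (hm : 0 < m) (u : Fin m) :
    #{a : Fin n | (a : ℕ) % m = u} = n / m + if (u : ℕ) < n % m then 1 else 0 := by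
  have hcount : #{a : Fin n | (a : ℕ) % m = u} = n.count (· ≡ u [MOD m]) := by
    rw [Nat.count_eq_card_filter_range, ← Nat.Iio_eq_range, ← Fin.map_valEmbedding_univ,
      filter_map, card_map]
    simp [Nat.ModEq, Nat.mod_eq_of_lt u.2]
  rw [hcount, Nat.count_modEq_card _ hm, Nat.mod_eq_of_lt u.2]

theorem SimpleGraph.CliqueFree.of_hom {V W : Type*} {G : SimpleGraph V} {H : SimpleGraph W}
    {n : ℕ} (f : H →g G) (h : G.CliqueFree n) : H.CliqueFree n := by
  rw [cliqueFree_iff] at h ⊢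
  refine ⟨fun c => h.false ?_⟩
  let g : (⊤ : SimpleGraph (Fin n)) →g G := f.comp c.toHom
  exact g.toCopy g.injective_of_top_hom

section Extremal

variable {r : ℕ}

lemma qmin_le_maxQmin {n : ℕ} {G : SimpleGraph (Fin n)} (hG : G.CliqueFree (r + 1)) :
    qmin G ≤ maxQmin r n :=
  le_csSup ⟨n, by rintro _ ⟨H, -, rfl⟩; simpa using qmin_le_card H⟩ ⟨G, hG, rfl⟩

lemma maxQmin_nonneg (r n : ℕ) : 0 ≤ maxQmin r n :=
  Real.sSup_nonneg (by rintro _ ⟨G, -, rfl⟩; exact qmin_nonneg G)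

lemma qmin_div_le_cSup {m : ℕ} (hm : 0 < m) {G : SimpleGraph (Fin m)}
    (hG : G.CliqueFree (r + 1)) : qmin G / m ≤ cSup r := by
  refine le_csSup ⟨1, ?_⟩ ⟨m, G, hm, hG, rfl⟩
  rintro _ ⟨k, H, hk, -, rfl⟩
  rw [div_le_one (mod_cast hk)]
  simpa using qmin_le_card H

lemma cSup_nonneg (r : ℕ) : 0 ≤ cSup r :=
  Real.sSup_nonneg <| by
    rintro _ ⟨m, G, -, -, rfl⟩
    exact div_nonneg (qmin_nonneg G) m.cast_nonneg

lemma maxQmin_div_le_cSup (r n : ℕ) : maxQmin r n / n ≤ cSup r := by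
  rcases n.eq_zero_or_pos with rfl | hn
  · simpa using cSup_nonneg r
  rw [div_le_iff₀ (mod_cast hn)]
  refine Real.sSup_le ?_ (mul_nonneg (cSup_nonneg r) n.cast_nonneg)
  rintro _ ⟨G, hG, rfl⟩
  rw [← div_le_iff₀ (mod_cast hn)]
  exact qmin_div_le_cSup hn hG

lemma le_maxQmin_div {m n : ℕ} (hm : 0 < m) (hn : 0 < n) {G : SimpleGraph (Fin m)}
    (hG : G.CliqueFree (r + 1)) : qmin G / m - (qmin G + m) / n ≤ maxQmin r n / n := by
  have : Nonempty (Fin n) := ⟨⟨0, hn⟩⟩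
  let p : Fin n → Fin m := fun a => ⟨a % m, Nat.mod_lt _ hm⟩
  have hfib : ∀ u, n / m ≤ #{a | p a = u} ∧ #{a | p a = u} ≤ n / m + 1 := by
    intro u
    simp only [p, Fin.ext_iff, card_filter_val_mod_eq hm u]
    split_ifs <;> omega
  have hblow := le_qmin_comap G p (n / m) hfib
  have ht : (n : ℝ) / m - 1 ≤ (n / m : ℕ) := by
    rw [← Nat.floor_div_eq_div (K := ℝ)]
    exact (Nat.sub_one_lt_floor _).le
  rw [Fintype.card_fin] at hblow
  rw [le_div_iff₀ (mod_cast hn)]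
  calc (qmin G / m - (qmin G + m) / n) * n = (n / m - 1) * qmin G - m := by
        field_simp
        ring
    _ ≤ (n / m : ℕ) * qmin G - m := by gcongr; exact qmin_nonneg G
    _ ≤ maxQmin r n := hblow.trans (qmin_le_maxQmin (hG.of_hom ⟨p, id⟩))

end Extremal

theorem tendsto_maxQmin_div_general (r : ℕ) :
    Filter.Tendsto (fun n : ℕ => maxQmin r n / n) Filter.atTop (nhds (cSup r)) := by
  refine tendsto_order.2 ⟨fun a ha => ?_, fun b hb =>
    Filter.Eventually.of_forall fun n => (maxQmin_div_le_cSup r n).trans_lt hb⟩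
  -- The set defining `cSup r` may be empty (for `r = 0`), and then `cSup r = sSup ∅ = 0`.
  rcases lt_or_ge a 0 with ha0 | ha0
  · exact Filter.Eventually.of_forall fun n =>
      ha0.trans_le (div_nonneg (maxQmin_nonneg r n) n.cast_nonneg)
  obtain ⟨_, ⟨m, G, hm, hG, rfl⟩, haG⟩ :=
    exists_lt_of_lt_csSup (Set.nonempty_iff_ne_empty.2 fun h => by
      rw [cSup, h, Real.sSup_empty] at ha
      linarith) ha
  have hlim : Filter.Tendsto (fun n : ℕ => qmin G / m - (qmin G + m) / n) Filter.atTop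
      (nhds (qmin G / m)) := by
    simpa using tendsto_const_nhds.sub (tendsto_const_div_atTop_nhds_zero_nat (qmin G + m))
  filter_upwards [hlim.eventually (lt_mem_nhds haG), Filter.eventually_gt_atTop 0] with n hlt hn
  exact hlt.trans_le (le_maxQmin_div hm hn hG)

/-- For every `r ≥ 2`, the limit of `f_r(n)/n` as `n → ∞` exists and
equals `c_r`. -/
theorem tendsto_maxQmin_div (r : ℕ) (hr : 2 ≤ r) :
    Filter.Tendsto (fun n : ℕ => maxQmin r n / n) Filter.atTop (nhds (cSup r)) :=
  tendsto_maxQmin_div_general r
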